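/- Consider the linear model Y_i = X_i^⊤ β* + ε_i with ε_i i.i.d. U([−a,a]), a > 0 a constant, and any random design X_i independent of the errors. Define the quantity ℛ := a²p / (16 (inf_{R ∈ 𝒪} max_{j ∈ [p]} 𝔼_X Σ_{i ∈ [n]} |(X_i^⊤ R)_j|)²), where 𝒪 is the set of p × p orthogonal matrices. Then: (i) inf_{β̂} sup_{β* ∈ ℝ^p} 𝔼_{β*} ‖β̂ − β*‖₂² ≥ ℛ, where the infimum is over all estimators β̂ of β* from the data; and (ii) inf_{β̂} sup_{β* ∈ ℝ^p} ℙ_{β*}( ‖β̂ − β*‖₂ ≥ √(ℛ/2) ) ≥ 1/2⁸. -/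

import Mathlib

/-!
Assouad's hypercube argument. For an orthonormal basis `b` and `δ > 0` take the `2 ^ p`
parameters `β_v = δ ∑ⱼ ±bⱼ`. An estimate `β̂` yields the sign tests `vⱼ ≈ sign ⟪bⱼ, β̂⟫`, and
`‖β̂ - β_v‖² ≥ δ² · #(wrong signs)`. Flipping `vⱼ` shifts every `Yᵢ` by `±2δ ⟪Xᵢ, bⱼ⟫`; a shift by
`t` moves the product of uniform laws on `[-a, a]` by at most `∑ᵢ |tᵢ| / (2a)` in total variation,
so the two data laws are `δ cⱼ / a`-close, where `cⱼ = 𝔼 ∑ᵢ |⟪Xᵢ, bⱼ⟫|`, and the `j`-th test errs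
with average probability at least `(1 - δ cⱼ / a) / 2`. Choosing `b` nearly optimal for the design
constant and `δ = a / (2 maxⱼ cⱼ)` gives (i) at once and (ii) through Markov's inequality on the
number of wrong signs.
-/

open MeasureTheory ProbabilityTheory
open scoped ENNReal

noncomputable section

/-- The uniform probability measure on `[-a, a]`. -/
def unifIcc (a : ℝ) : Measure ℝ :=
  (ENNReal.ofReal (2 * a))⁻¹ • (volume.restrict (Set.Icc (-a) a))

/-- The joint law of the data `(X_i, Y_i)_{i ∈ [n]}` in the linear model
`Y_i = X_i^⊤β* + ε_i` with design law `μX` (joint law of `(X_1,…,X_n)`) and noise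
`ε_i` i.i.d. `U([-a,a])` independent of the design. -/
def dataLaw (n p : ℕ) (a : ℝ) (μX : Measure (Fin n → EuclideanSpace ℝ (Fin p)))
    (βstar : EuclideanSpace ℝ (Fin p)) :
    Measure (Fin n → EuclideanSpace ℝ (Fin p) × ℝ) :=
  Measure.map
    (fun z : (Fin n → EuclideanSpace ℝ (Fin p)) × (Fin n → ℝ) =>
      fun i => (z.1 i, (∑ j, z.1 i j * βstar j) + z.2 i))
    (μX.prod (Measure.pi fun _ : Fin n => unifIcc a))

open scoped InnerProductSpace Finset

theorem isProbabilityMeasure_unifIcc {a : ℝ} (ha : 0 < a) : IsProbabilityMeasure (unifIcc a) := by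
  constructor
  rw [unifIcc, Measure.smul_apply, Measure.restrict_apply MeasurableSet.univ, Set.univ_inter,
    Real.volume_Icc, smul_eq_mul, sub_neg_eq_add, ← two_mul]
  exact ENNReal.inv_mul_cancel (by simpa using ha) ENNReal.ofReal_ne_top

theorem smul_restrict_preimage_add_le {G : Type*} [MeasurableSpace G] [AddGroup G]
    [MeasurableAdd G] (μ : Measure G) [μ.IsAddRightInvariant] (c : ℝ≥0∞) {S : Set G}
    (hS : MeasurableSet S) (B : Set G) (t : G) :
    (c • μ.restrict S) ((· + t) ⁻¹' B) ≤
      (c • μ.restrict S) B + (c • μ.restrict S) ((· + t) ⁻¹' Sᶜ) := by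
  set ν := c • μ.restrict S
  have hsplit : (· + t) ⁻¹' B ⊆ (· + t) ⁻¹' (B ∩ S) ∪ (· + t) ⁻¹' Sᶜ := fun x hx => by
    by_cases h : x + t ∈ S
    · exact Or.inl ⟨hx, h⟩
    · exact Or.inr h
  have hinside : ν ((· + t) ⁻¹' (B ∩ S)) ≤ ν B := by
    simp only [ν, Measure.smul_apply, smul_eq_mul, Measure.restrict_apply' hS]
    refine mul_le_mul_right ?_ c
    calc μ ((· + t) ⁻¹' (B ∩ S) ∩ S) ≤ μ ((· + t) ⁻¹' (B ∩ S)) := measure_mono Set.inter_subset_left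
      _ = μ (B ∩ S) := measure_preimage_add_right μ t _
  calc ν ((· + t) ⁻¹' B) ≤ ν ((· + t) ⁻¹' (B ∩ S)) + ν ((· + t) ⁻¹' Sᶜ) :=
        (measure_mono hsplit).trans (measure_union_le _ _)
    _ ≤ ν B + ν ((· + t) ⁻¹' Sᶜ) := by gcongr

theorem pi_unifIcc_eq {ι : Type*} [Fintype ι] {a : ℝ} (ha : 0 < a) :
    Measure.pi (fun _ : ι => unifIcc a) =
      (ENNReal.ofReal (2 * a))⁻¹ ^ Fintype.card ι •
        volume.restrict (Set.univ.pi fun _ : ι => Set.Icc (-a) a) := by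
  have := isProbabilityMeasure_unifIcc ha
  refine Measure.pi_eq fun s hs => ?_
  rw [Measure.smul_apply, Measure.restrict_apply (MeasurableSet.univ_pi hs),
    ← Set.pi_inter_distrib, volume_pi, Measure.pi_pi, smul_eq_mul, ← Finset.card_univ,
    ← Finset.prod_const, ← Finset.prod_mul_distrib]
  simp only [unifIcc, Measure.smul_apply, Measure.restrict_apply (hs _), smul_eq_mul]

theorem unifIcc_preimage_add_compl_le {a : ℝ} (ha : 0 < a) (t : ℝ) :
    unifIcc a ((· + t) ⁻¹' (Set.Icc (-a) a)ᶜ) ≤ ENNReal.ofReal (|t| / (2 * a)) := by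
  rw [unifIcc, Measure.smul_apply, Measure.restrict_apply
    (measurableSet_Icc.compl.preimage (measurable_add_const t)), smul_eq_mul,
    ENNReal.ofReal_div_of_pos (by positivity), div_eq_mul_inv, mul_comm]
  gcongr
  rcases le_or_gt 0 t with ht | ht
  · calc volume ((· + t) ⁻¹' (Set.Icc (-a) a)ᶜ ∩ Set.Icc (-a) a)
        ≤ volume (Set.Ioc (a - t) a) := measure_mono fun s ⟨hout, hs⟩ => by
          simp only [Set.mem_preimage, Set.mem_compl_iff, Set.mem_Icc, not_and_or,
            not_le] at hout hs
          exact ⟨by rcases hout with h | h <;> linarith, hs.2⟩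
      _ = ENNReal.ofReal |t| := by rw [Real.volume_Ioc, abs_of_nonneg ht, sub_sub_cancel]
  · calc volume ((· + t) ⁻¹' (Set.Icc (-a) a)ᶜ ∩ Set.Icc (-a) a)
        ≤ volume (Set.Ico (-a) (-a - t)) := measure_mono fun s ⟨hout, hs⟩ => by
          simp only [Set.mem_preimage, Set.mem_compl_iff, Set.mem_Icc, not_and_or,
            not_le] at hout hs
          exact ⟨hs.1, by rcases hout with h | h <;> linarith⟩
      _ = ENNReal.ofReal |t| := by rw [Real.volume_Ico, abs_of_neg ht]; ring_nf

theorem pi_unifIcc_preimage_add_le {ι : Type*} [Fintype ι] {a : ℝ} (ha : 0 < a)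
    (B : Set (ι → ℝ)) (t : ι → ℝ) :
    Measure.pi (fun _ : ι => unifIcc a) ((· + t) ⁻¹' B) ≤
      Measure.pi (fun _ : ι => unifIcc a) B + ENNReal.ofReal ((∑ i, |t i|) / (2 * a)) := by
  have := isProbabilityMeasure_unifIcc ha
  set box : Set (ι → ℝ) := Set.univ.pi fun _ => Set.Icc (-a) a
  have hleave : (· + t) ⁻¹' boxᶜ ⊆
      ⋃ i, Function.eval i ⁻¹' ((· + t i) ⁻¹' (Set.Icc (-a) a)ᶜ) := fun e he => by
    simp only [box, Set.mem_preimage, Set.mem_compl_iff, Set.mem_pi, Set.mem_univ,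
      true_implies, not_forall] at he
    obtain ⟨i, hi⟩ := he
    exact Set.mem_iUnion.2 ⟨i, hi⟩
  set π := Measure.pi fun _ : ι => unifIcc a
  calc π ((· + t) ⁻¹' B) ≤ π B + π ((· + t) ⁻¹' boxᶜ) := by
        rw [show π = _ from pi_unifIcc_eq ha]
        exact smul_restrict_preimage_add_le _ _
          (MeasurableSet.univ_pi fun _ => measurableSet_Icc) _ _
    _ ≤ π B + ∑ i, unifIcc a ((· + t i) ⁻¹' (Set.Icc (-a) a)ᶜ) := by
        gcongr
        refine (measure_mono hleave).trans ((measure_iUnion_fintype_le _ _).trans_eq ?_)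
        refine Finset.sum_congr rfl fun i _ => ?_
        exact (measurePreserving_eval _ i).measure_preimage
          (measurableSet_Icc.compl.preimage (measurable_add_const _)).nullMeasurableSet
    _ ≤ π B + ∑ i, ENNReal.ofReal (|t i| / (2 * a)) := by
        gcongr with i
        exact unifIcc_preimage_add_compl_le ha _
    _ = π B + ENNReal.ofReal ((∑ i, |t i|) / (2 * a)) := by
        rw [Finset.sum_div, ENNReal.ofReal_sum_of_nonneg fun i _ => by positivity]

theorem EuclideanSpace.sum_mul_eq_inner {ι : Type*} [Fintype ι] (x y : EuclideanSpace ℝ ι) :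
    ∑ k, x k * y k = ⟪x, y⟫_ℝ := by
  simp [PiLp.inner_apply, mul_comm]

section DataLaw

variable {n p : ℕ}

def dataMap (β : EuclideanSpace ℝ (Fin p)) :
    (Fin n → EuclideanSpace ℝ (Fin p)) × (Fin n → ℝ) → Fin n → EuclideanSpace ℝ (Fin p) × ℝ :=
  fun z i => (z.1 i, (∑ j, z.1 i j * β j) + z.2 i)

theorem dataLaw_eq_map (a : ℝ) (μX : Measure (Fin n → EuclideanSpace ℝ (Fin p)))
    (β : EuclideanSpace ℝ (Fin p)) :
    dataLaw n p a μX β = (μX.prod (Measure.pi fun _ => unifIcc a)).map (dataMap β) :=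
  rfl

theorem measurable_dataMap (β : EuclideanSpace ℝ (Fin p)) : Measurable (dataMap (n := n) β) := by
  unfold dataMap
  fun_prop

theorem isProbabilityMeasure_dataLaw {a : ℝ} (ha : 0 < a)
    (μX : Measure (Fin n → EuclideanSpace ℝ (Fin p))) [IsProbabilityMeasure μX]
    (β : EuclideanSpace ℝ (Fin p)) : IsProbabilityMeasure (dataLaw n p a μX β) := by
  have := isProbabilityMeasure_unifIcc ha
  exact Measure.isProbabilityMeasure_map (measurable_dataMap β).aemeasurable

theorem dataMap_eq_shift (β β' : EuclideanSpace ℝ (Fin p))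
    (x : Fin n → EuclideanSpace ℝ (Fin p)) (e : Fin n → ℝ) :
    dataMap β' (x, e) = dataMap β (x, e + fun i => ⟪x i, β' - β⟫_ℝ) := by
  funext i
  simp only [dataMap, EuclideanSpace.sum_mul_eq_inner, Pi.add_apply, inner_sub_right]
  ring_nf

theorem dataLaw_le_add_ofReal {a : ℝ} (ha : 0 < a)
    (μX : Measure (Fin n → EuclideanSpace ℝ (Fin p))) (β β' : EuclideanSpace ℝ (Fin p))
    {S : Set (Fin n → EuclideanSpace ℝ (Fin p) × ℝ)} (hS : MeasurableSet S)
    (hint : Integrable (fun x => ∑ i, |⟪x i, β' - β⟫_ℝ|) μX) :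
    dataLaw n p a μX β' S ≤ dataLaw n p a μX β S +
      ENNReal.ofReal ((∫ x, ∑ i, |⟪x i, β' - β⟫_ℝ| ∂μX) / (2 * a)) := by
  have := isProbabilityMeasure_unifIcc ha
  set π := Measure.pi fun _ : Fin n => unifIcc a
  have hsection : ∀ x, Prod.mk x ⁻¹' (dataMap β' ⁻¹' S) =
      (· + fun i => ⟪x i, β' - β⟫_ℝ) ⁻¹' (Prod.mk x ⁻¹' (dataMap β ⁻¹' S)) := fun x => by
    ext e
    simp [dataMap_eq_shift β β']
  rw [dataLaw_eq_map, dataLaw_eq_map, Measure.map_apply (measurable_dataMap β') hS,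
    Measure.map_apply (measurable_dataMap β) hS, Measure.prod_apply (measurable_dataMap β' hS),
    Measure.prod_apply (measurable_dataMap β hS)]
  calc ∫⁻ x, π (Prod.mk x ⁻¹' (dataMap β' ⁻¹' S)) ∂μX
      ≤ ∫⁻ x, π (Prod.mk x ⁻¹' (dataMap β ⁻¹' S)) +
          ENNReal.ofReal ((∑ i, |⟪x i, β' - β⟫_ℝ|) / (2 * a)) ∂μX :=
        lintegral_mono fun x => by rw [hsection]; exact pi_unifIcc_preimage_add_le ha _ _
    _ = ∫⁻ x, π (Prod.mk x ⁻¹' (dataMap β ⁻¹' S)) ∂μX +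
          ∫⁻ x, ENNReal.ofReal ((∑ i, |⟪x i, β' - β⟫_ℝ|) / (2 * a)) ∂μX :=
        lintegral_add_left (measurable_measure_prodMk_left (measurable_dataMap β hS)) _
    _ = _ := by
        rw [← integral_div, ofReal_integral_eq_lintegral_ofReal (hint.div_const _)
          (ae_of_all _ fun x => by positivity)]

end DataLaw

section OrthonormalBases

variable {ι : Type*} [Fintype ι]

theorem sum_mul_toMatrix_eq_inner (b : OrthonormalBasis ι ℝ (EuclideanSpace ℝ ι))
    (x : EuclideanSpace ℝ ι) (j : ι) :
    ∑ k, x k * (EuclideanSpace.basisFun ι ℝ).toBasis.toMatrix b k j = ⟪x, b j⟫_ℝ := by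
  simp [Module.Basis.toMatrix_apply, ← EuclideanSpace.sum_mul_eq_inner]

/-- A reflection sends `w` to a vector with equal coordinates in `e`; pulling `e` back through it
gives a basis no vector of which is orthogonal to `w`. -/
theorem OrthonormalBasis.exists_forall_inner_ne_zero {E : Type*} [NormedAddCommGroup E]
    [InnerProductSpace ℝ E] (e : OrthonormalBasis ι ℝ E) {w : E} (hw : w ≠ 0) :
    ∃ b : OrthonormalBasis ι ℝ E, ∀ j, ⟪b j, w⟫_ℝ ≠ 0 := by
  cases isEmpty_or_nonempty ι with
  | inl _ => exact ⟨e, isEmptyElim⟩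
  | inr _ =>
    set c : ℝ := ‖w‖ / √(Fintype.card ι)
    have hc : 0 < c := by positivity
    set u : E := e.repr.symm (WithLp.toLp 2 fun _ => c)
    have hwu : ‖w‖ = ‖u‖ := by
      rw [LinearIsometryEquiv.norm_map, EuclideanSpace.norm_eq]
      simp only [Real.norm_eq_abs, sq_abs, Finset.sum_const, Finset.card_univ, nsmul_eq_mul]
      rw [Real.sqrt_mul (by positivity), Real.sqrt_sq_eq_abs, abs_of_pos hc, mul_div_cancel₀]
      positivity
    set r := (ℝ ∙ (w - u))ᗮ.reflection
    refine ⟨e.map r, fun j => ?_⟩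
    calc ⟪(e.map r) j, w⟫_ℝ = ⟪r (e j), r (r w)⟫_ℝ := by
          simp [r, Submodule.reflection_reflection]
      _ = c := by
          rw [LinearIsometryEquiv.inner_map_map, Submodule.reflection_sub hwu,
            ← OrthonormalBasis.repr_apply_apply, LinearIsometryEquiv.apply_symm_apply]
      _ ≠ 0 := hc.ne'

variable [DecidableEq ι]

theorem orthonormal_columns_of_mem_orthogonalGroup {Q : Matrix ι ι ℝ}
    (hQ : Q ∈ Matrix.orthogonalGroup ι ℝ) :
    Orthonormal ℝ fun j => WithLp.toLp 2 fun k => Q k j := by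
  rw [orthonormal_iff_ite]
  intro i j
  simpa [PiLp.inner_apply, Matrix.mul_apply, Matrix.one_apply, mul_comm] using
    congr_fun₂ ((Matrix.mem_orthogonalGroup_iff' ι ℝ).1 hQ) i j

def orthonormalBasisOfMemOrthogonalGroup {Q : Matrix ι ι ℝ}
    (hQ : Q ∈ Matrix.orthogonalGroup ι ℝ) : OrthonormalBasis ι ℝ (EuclideanSpace ℝ ι) :=
  have hon := orthonormal_columns_of_mem_orthogonalGroup hQ
  OrthonormalBasis.mk hon (hon.linearIndependent.span_eq_top_of_card_eq_finrank' (by simp)).ge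

theorem sum_mul_eq_inner_orthonormalBasisOfMemOrthogonalGroup {Q : Matrix ι ι ℝ}
    (hQ : Q ∈ Matrix.orthogonalGroup ι ℝ) (x : EuclideanSpace ℝ ι) (j : ι) :
    ∑ k, x k * Q k j = ⟪x, orthonormalBasisOfMemOrthogonalGroup hQ j⟫_ℝ := by
  simp [orthonormalBasisOfMemOrthogonalGroup, ← EuclideanSpace.sum_mul_eq_inner]

end OrthonormalBases

section DesignConstant

variable {n p : ℕ}

def designConstant (μX : Measure (Fin n → EuclideanSpace ℝ (Fin p))) : ℝ :=
  ⨅ Rot : Matrix.orthogonalGroup (Fin p) ℝ, ⨆ j : Fin p,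
    ∫ x, ∑ i, |∑ k, x i k * (Rot : Matrix (Fin p) (Fin p) ℝ) k j| ∂μX

theorem designConstant_nonneg (μX : Measure (Fin n → EuclideanSpace ℝ (Fin p))) :
    0 ≤ designConstant μX :=
  Real.iInf_nonneg fun _ => Real.iSup_nonneg fun _ =>
    integral_nonneg fun _ => Finset.sum_nonneg fun _ _ => abs_nonneg _

theorem bddBelow_range_designConstant (μX : Measure (Fin n → EuclideanSpace ℝ (Fin p))) :
    BddBelow (Set.range fun Rot : Matrix.orthogonalGroup (Fin p) ℝ => ⨆ j : Fin p,
      ∫ x, ∑ i, |∑ k, x i k * (Rot : Matrix (Fin p) (Fin p) ℝ) k j| ∂μX) :=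
  ⟨0, Set.forall_mem_range.2 fun _ => Real.iSup_nonneg fun _ =>
    integral_nonneg fun _ => Finset.sum_nonneg fun _ _ => abs_nonneg _⟩

def integrableDirections (μX : Measure (Fin n → EuclideanSpace ℝ (Fin p))) :
    Submodule ℝ (EuclideanSpace ℝ (Fin p)) where
  carrier := {u | Integrable (fun x => ∑ i, |⟪x i, u⟫_ℝ|) μX}
  add_mem' {u v} hu hv := by
    refine (hu.add hv).mono' (Continuous.aestronglyMeasurable (by fun_prop))
      (ae_of_all _ fun x => ?_)
    rw [Real.norm_of_nonneg (Finset.sum_nonneg fun _ _ => abs_nonneg _), Pi.add_apply,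
      ← Finset.sum_add_distrib]
    exact Finset.sum_le_sum fun i _ => by rw [inner_add_right]; exact abs_add_le _ _
  zero_mem' := by simp
  smul_mem' c u hu := by
    simpa [inner_smul_right, abs_mul, ← Finset.mul_sum] using hu.const_mul |c|

/-- If some direction `u` had non-integrable design sums, so would every vector of a suitable
orthonormal basis, and the junk value `0` of their integrals would force `designConstant μX ≤ 0`. -/
theorem integrable_of_designConstant_pos {μX : Measure (Fin n → EuclideanSpace ℝ (Fin p))}
    (hI : 0 < designConstant μX) (u : EuclideanSpace ℝ (Fin p)) :
    Integrable (fun x => ∑ i, |⟪x i, u⟫_ℝ|) μX := by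
  by_contra hu
  have htop : integrableDirections μX ≠ ⊤ := fun h =>
    hu (show u ∈ integrableDirections μX from h ▸ Submodule.mem_top)
  obtain ⟨w, hwV, hw⟩ :=
    (Submodule.ne_bot_iff _).1 (mt Submodule.orthogonal_eq_bot_iff.1 htop)
  obtain ⟨b, hb⟩ := (EuclideanSpace.basisFun (Fin p) ℝ).exists_forall_inner_ne_zero hw
  have hbV : ∀ j, b j ∉ integrableDirections μX := fun j hj =>
    hb j (Submodule.inner_right_of_mem_orthogonal hj hwV)
  refine hI.not_ge ?_
  calc designConstant μX ≤ ⨆ j : Fin p, ∫ x, ∑ i, |⟪x i, b j⟫_ℝ| ∂μX := by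
        unfold designConstant
        simpa only [sum_mul_toMatrix_eq_inner] using ciInf_le (bddBelow_range_designConstant μX)
          ⟨_, (EuclideanSpace.basisFun (Fin p) ℝ).toMatrix_orthonormalBasis_mem_orthogonal b⟩
    _ = 0 := by simp [integral_undef (hbV _)]

theorem exists_orthonormalBasis_integral_le {μX : Measure (Fin n → EuclideanSpace ℝ (Fin p))}
    {c : ℝ} (hc : designConstant μX < c) :
    ∃ b : OrthonormalBasis (Fin p) ℝ (EuclideanSpace ℝ (Fin p)),
      ∀ j, ∫ x, ∑ i, |⟪x i, b j⟫_ℝ| ∂μX ≤ c := by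
  obtain ⟨⟨Q, hQ⟩, hQc⟩ := exists_lt_of_ciInf_lt hc
  refine ⟨orthonormalBasisOfMemOrthogonalGroup hQ, fun j => ?_⟩
  simp only [← sum_mul_eq_inner_orthonormalBasisOfMemOrthogonalGroup hQ]
  exact (le_ciSup (Set.finite_range _).bddAbove j).trans hQc.le

end DesignConstant

section Assouad

variable {ι : Type*} [DecidableEq ι]

def bitFlip (j : ι) (v : ι → Bool) : ι → Bool := Function.update v j (!v j)

theorem bitFlip_involutive (j : ι) : Function.Involutive (bitFlip j) := fun v => by
  funext k
  by_cases hk : k = j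
  · subst hk; simp [bitFlip]
  · simp [bitFlip, Function.update_of_ne hk]

variable [Fintype ι]

theorem two_pow_mul_le_two_mul_sum_measureReal {Ω : Type*} [MeasurableSpace Ω]
    (P : (ι → Bool) → Measure Ω) [∀ v, IsProbabilityMeasure (P v)] (j : ι)
    {A : (ι → Bool) → Set Ω} (hA : ∀ v, MeasurableSet (A v))
    (hflip : ∀ v, A (bitFlip j v) = (A v)ᶜ) {κ : ℝ}
    (hclose : ∀ v, (P (bitFlip j v)).real (A v) ≤ (P v).real (A v) + κ) :
    2 ^ Fintype.card ι * (1 - κ) ≤ 2 * ∑ v, (P v).real (A v) := by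
  have hpair : ∀ v, 1 - κ ≤ (P v).real (A v) + (P (bitFlip j v)).real (A (bitFlip j v)) := by
    intro v
    rw [hflip, probReal_compl_eq_one_sub (hA v)]
    linarith [hclose v]
  have hreindex : ∑ v, (P (bitFlip j v)).real (A (bitFlip j v)) = ∑ v, (P v).real (A v) :=
    Equiv.sum_comp (bitFlip_involutive j).toPerm fun v => (P v).real (A v)
  have hsum := Finset.sum_le_sum fun v (_ : v ∈ Finset.univ) => hpair v
  rw [Finset.sum_add_distrib, hreindex] at hsum
  simp only [Finset.sum_const, Finset.card_univ, Fintype.card_fun, Fintype.card_bool,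
    nsmul_eq_mul, Nat.cast_pow, Nat.cast_ofNat] at hsum
  linarith

theorem exists_sum_measureReal_ge {Ω : Type*} [MeasurableSpace Ω]
    (P : (ι → Bool) → Measure Ω) [∀ v, IsProbabilityMeasure (P v)]
    {A : ι → (ι → Bool) → Set Ω} (hA : ∀ j v, MeasurableSet (A j v))
    (hflip : ∀ j v, A j (bitFlip j v) = (A j v)ᶜ) {κ : ℝ}
    (hclose : ∀ j v, (P (bitFlip j v)).real (A j v) ≤ (P v).real (A j v) + κ) :
    ∃ v, Fintype.card ι * (1 - κ) / 2 ≤ ∑ j, (P v).real (A j v) := by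
  have hsum : ∑ _v : ι → Bool, Fintype.card ι * (1 - κ) / 2 ≤
      ∑ v, ∑ j, (P v).real (A j v) := by
    rw [Finset.sum_comm]
    have hj := fun j (_ : j ∈ Finset.univ) =>
      two_pow_mul_le_two_mul_sum_measureReal P j (hA j) (hflip j) (hclose j)
    have := Finset.sum_le_sum hj
    simp only [Finset.sum_const, Finset.card_univ, Fintype.card_fun, Fintype.card_bool,
      nsmul_eq_mul, Nat.cast_pow, Nat.cast_ofNat, ← Finset.mul_sum] at this ⊢
    linarith
  obtain ⟨v, -, hv⟩ := Finset.exists_le_of_sum_le Finset.univ_nonempty hsum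
  exact ⟨v, hv⟩

end Assouad

section Hypercube

variable {ι : Type*} [Fintype ι] {E : Type*} [NormedAddCommGroup E] [InnerProductSpace ℝ E]

def signVec (v : ι → Bool) : EuclideanSpace ℝ ι := WithLp.toLp 2 fun j => if v j then 1 else -1

def hypercubeVertex (b : OrthonormalBasis ι ℝ E) (δ : ℝ) (v : ι → Bool) : E :=
  b.repr.symm (δ • signVec v)

def testError {Ω : Type*} (βhat : Ω → E) (b : OrthonormalBasis ι ℝ E) (j : ι)
    (v : ι → Bool) : Set Ω :=
  {d | decide (0 ≤ b.repr (βhat d) j) ≠ v j}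

theorem sq_mul_card_le_norm_sub_smul_signVec (z : EuclideanSpace ℝ ι) (v : ι → Bool) {δ : ℝ}
    (hδ : 0 ≤ δ) :
    δ ^ 2 * #{j | decide (0 ≤ z j) ≠ v j} ≤ ‖z - δ • signVec v‖ ^ 2 := by
  rw [EuclideanSpace.real_norm_sq_eq, mul_comm, ← nsmul_eq_mul, ← Finset.sum_const]
  refine Finset.sum_le_sum_of_subset_of_nonneg (Finset.filter_subset _ _)
    (fun _ _ _ => sq_nonneg _) |>.trans' (Finset.sum_le_sum fun j hj => ?_)
  simp only [Finset.mem_filter, Finset.mem_univ, true_and] at hj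
  simp only [signVec, PiLp.sub_apply, PiLp.smul_apply, smul_eq_mul]
  cases hv : v j <;> simp only [hv, ne_eq, decide_eq_true_eq, decide_eq_false_iff_not, not_not,
    Bool.false_eq_true, if_false, if_true] at hj ⊢ <;> nlinarith

theorem norm_sub_hypercubeVertex (b : OrthonormalBasis ι ℝ E) (δ : ℝ) (v : ι → Bool) (x : E) :
    ‖x - hypercubeVertex b δ v‖ = ‖b.repr x - δ • signVec v‖ := by
  rw [← b.repr.norm_map, map_sub, hypercubeVertex, LinearIsometryEquiv.apply_symm_apply]

theorem hypercubeVertex_bitFlip_sub [DecidableEq ι] (b : OrthonormalBasis ι ℝ E) (δ : ℝ) (j : ι)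
    (v : ι → Bool) :
    hypercubeVertex b δ (bitFlip j v) - hypercubeVertex b δ v =
      (if v j then -(2 * δ) else 2 * δ) • b j := by
  have hsign : signVec (bitFlip j v) - signVec v =
      (if v j then -2 else 2 : ℝ) • EuclideanSpace.single j 1 := by
    ext k
    by_cases hk : k = j
    · subst hk; cases h : v k <;> simp [signVec, bitFlip, h] <;> norm_num
    · split_ifs <;> simp [signVec, bitFlip, hk]
  rw [hypercubeVertex, hypercubeVertex, ← map_sub, ← smul_sub, hsign, smul_smul, map_smul,
    b.repr_symm_single]
  split_ifs <;> ring_nf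

theorem abs_inner_hypercubeVertex_bitFlip_sub [DecidableEq ι] (b : OrthonormalBasis ι ℝ E)
    {δ : ℝ} (hδ : 0 ≤ δ) (j : ι) (v : ι → Bool) (y : E) :
    |⟪y, hypercubeVertex b δ (bitFlip j v) - hypercubeVertex b δ v⟫_ℝ| = 2 * δ * |⟪y, b j⟫_ℝ| := by
  rw [hypercubeVertex_bitFlip_sub, inner_smul_right, abs_mul]
  split_ifs <;> simp [abs_of_nonneg hδ]

variable {Ω : Type*} {βhat : Ω → E}

theorem testError_bitFlip [DecidableEq ι] (b : OrthonormalBasis ι ℝ E) (j : ι) (v : ι → Bool) :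
    testError βhat b j (bitFlip j v) = (testError βhat b j v)ᶜ := by
  ext d
  cases h : v j <;> simp [testError, bitFlip, h]

theorem sum_indicator_testError (b : OrthonormalBasis ι ℝ E) (v : ι → Bool) (d : Ω) :
    ∑ j, (testError βhat b j v).indicator (1 : Ω → ℝ) d =
      #{j | decide (0 ≤ b.repr (βhat d) j) ≠ v j} := by
  simp only [Set.indicator_apply, testError, Set.mem_ofPred_eq, Pi.one_apply, Finset.sum_boole]

theorem sq_mul_sum_indicator_testError_le (b : OrthonormalBasis ι ℝ E) {δ : ℝ} (hδ : 0 ≤ δ)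
    (v : ι → Bool) (d : Ω) :
    δ ^ 2 * ∑ j, (testError βhat b j v).indicator 1 d ≤ ‖βhat d - hypercubeVertex b δ v‖ ^ 2 := by
  rw [sum_indicator_testError, norm_sub_hypercubeVertex]
  exact sq_mul_card_le_norm_sub_smul_signVec _ v hδ

variable [MeasurableSpace Ω] [MeasurableSpace E] [OpensMeasurableSpace E]

theorem measurableSet_testError (hβ : Measurable βhat) (b : OrthonormalBasis ι ℝ E) (j : ι)
    (v : ι → Bool) : MeasurableSet (testError βhat b j v) := by
  have hcoord : Measurable fun d => b.repr (βhat d) j := by fun_prop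
  cases hv : v j
  · simpa [testError, hv] using measurableSet_le measurable_const hcoord
  · simpa [testError, hv] using measurableSet_lt hcoord measurable_const

end Hypercube

theorem integral_sum_indicator_one {Ω ι : Type*} [MeasurableSpace Ω] [Fintype ι]
    (P : Measure Ω) [IsFiniteMeasure P] {A : ι → Set Ω} (hA : ∀ j, MeasurableSet (A j)) :
    ∫ d, ∑ j, (A j).indicator 1 d ∂P = ∑ j, P.real (A j) := by
  rw [integral_finsetSum _ fun j _ => (integrable_const 1).indicator (hA j)]
  exact Finset.sum_congr rfl fun j _ => integral_indicator_one (hA j)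

section HypercubeRisk

variable {ι : Type*} [Fintype ι] {E : Type*} [NormedAddCommGroup E] [InnerProductSpace ℝ E]
  [MeasurableSpace E] [OpensMeasurableSpace E] {Ω : Type*} [MeasurableSpace Ω]
  (P : Measure Ω) {βhat : Ω → E}

theorem ofReal_sq_mul_sum_measureReal_testError_le [IsFiniteMeasure P] (hβ : Measurable βhat)
    (b : OrthonormalBasis ι ℝ E) {δ : ℝ} (hδ : 0 ≤ δ) (v : ι → Bool) :
    ENNReal.ofReal (δ ^ 2 * ∑ j, P.real (testError βhat b j v)) ≤
      ∫⁻ d, ENNReal.ofReal (‖βhat d - hypercubeVertex b δ v‖ ^ 2) ∂P := by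
  have hA := measurableSet_testError hβ b (v := v)
  have hint : Integrable (fun d => δ ^ 2 * ∑ j, (testError βhat b j v).indicator 1 d) P :=
    (integrable_finsetSum _ fun j _ => (integrable_const 1).indicator (hA j)).const_mul _
  rw [← integral_sum_indicator_one P hA, ← integral_const_mul,
    ofReal_integral_eq_lintegral_ofReal hint (ae_of_all _ fun d =>
      mul_nonneg (sq_nonneg δ) (Finset.sum_nonneg fun j _ => Set.indicator_nonneg (by simp) d))]
  exact lintegral_mono fun d => ENNReal.ofReal_le_ofReal
    (sq_mul_sum_indicator_testError_le b hδ v d)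

/-- Off the event `{τ ≤ ‖βhat - vertex‖}`, fewer than `k` sign tests err. -/
theorem sum_measureReal_testError_le [IsProbabilityMeasure P] (hβ : Measurable βhat)
    (b : OrthonormalBasis ι ℝ E) {δ τ k : ℝ} (hδ : 0 < δ) (hτ : τ ^ 2 ≤ δ ^ 2 * k)
    (v : ι → Bool) :
    ∑ j, P.real (testError βhat b j v) ≤
      k + Fintype.card ι * P.real {d | τ ≤ ‖βhat d - hypercubeVertex b δ v‖} := by
  set G := {d | τ ≤ ‖βhat d - hypercubeVertex b δ v‖}
  have hA := measurableSet_testError hβ b (v := v)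
  have hG : MeasurableSet G := measurableSet_le measurable_const
    ((continuous_sub_right _).norm.measurable.comp hβ)
  have hk : 0 ≤ k := nonneg_of_mul_nonneg_right ((sq_nonneg τ).trans hτ) (by positivity)
  have hpoint : ∀ d, ∑ j, (testError βhat b j v).indicator 1 d ≤
      k + Fintype.card ι * G.indicator 1 d := fun d => by
    by_cases hd : d ∈ G
    · rw [Set.indicator_of_mem hd, Pi.one_apply, mul_one, sum_indicator_testError]
      exact (Nat.cast_le.2 (Finset.card_le_univ _)).trans (le_add_of_nonneg_left hk)
    · have hclose : ‖βhat d - hypercubeVertex b δ v‖ ^ 2 < τ ^ 2 := by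
        simp only [G, Set.mem_ofPred_eq, not_le] at hd
        exact pow_lt_pow_left₀ hd (norm_nonneg _) two_ne_zero
      rw [Set.indicator_of_notMem hd, mul_zero, add_zero]
      have := sq_mul_sum_indicator_testError_le (βhat := βhat) b hδ.le v d
      nlinarith
  have hGint : Integrable (fun d => (Fintype.card ι : ℝ) * G.indicator 1 d) P :=
    ((integrable_const 1).indicator hG).const_mul _
  calc ∑ j, P.real (testError βhat b j v)
      = ∫ d, ∑ j, (testError βhat b j v).indicator 1 d ∂P :=
        (integral_sum_indicator_one P hA).symm
    _ ≤ ∫ d, k + Fintype.card ι * G.indicator 1 d ∂P :=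
        integral_mono (integrable_finsetSum _ fun j _ => (integrable_const 1).indicator (hA j))
          ((integrable_const k).add hGint) hpoint
    _ = k + Fintype.card ι * P.real G := by
        rw [integral_add (integrable_const k) hGint, integral_const, integral_const_mul,
          integral_indicator_one hG]
        simp

end HypercubeRisk

section LinearModel

variable {n p : ℕ} {a : ℝ} (μX : Measure (Fin n → EuclideanSpace ℝ (Fin p)))
  {βhat : (Fin n → EuclideanSpace ℝ (Fin p) × ℝ) → EuclideanSpace ℝ (Fin p)}
  (b : OrthonormalBasis (Fin p) ℝ (EuclideanSpace ℝ (Fin p))) {δ c : ℝ}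

theorem measureReal_testError_bitFlip_le (ha : 0 < a) [IsProbabilityMeasure μX]
    (hβ : Measurable βhat) (hδ : 0 ≤ δ) (j : Fin p)
    (hint : Integrable (fun x => ∑ i, |⟪x i, b j⟫_ℝ|) μX)
    (hc : ∫ x, ∑ i, |⟪x i, b j⟫_ℝ| ∂μX ≤ c) (v : Fin p → Bool) :
    (dataLaw n p a μX (hypercubeVertex b δ (bitFlip j v))).real (testError βhat b j v) ≤
      (dataLaw n p a μX (hypercubeVertex b δ v)).real (testError βhat b j v) + δ * c / a := by
  have := isProbabilityMeasure_dataLaw ha μX (hypercubeVertex b δ v)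
  have hle := dataLaw_le_add_ofReal ha μX (hypercubeVertex b δ v)
    (hypercubeVertex b δ (bitFlip j v)) (measurableSet_testError hβ b j v)
    (by simpa only [abs_inner_hypercubeVertex_bitFlip_sub b hδ j v, Finset.mul_sum] using
      hint.const_mul (2 * δ))
  simp only [abs_inner_hypercubeVertex_bitFlip_sub b hδ j v, ← Finset.mul_sum,
    integral_const_mul] at hle
  have hI : 0 ≤ ∫ x, ∑ i, |⟪x i, b j⟫_ℝ| ∂μX :=
    integral_nonneg fun x => Finset.sum_nonneg fun i _ => abs_nonneg _
  calc (dataLaw n p a μX (hypercubeVertex b δ (bitFlip j v))).real (testError βhat b j v)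
      ≤ (dataLaw n p a μX (hypercubeVertex b δ v)).real (testError βhat b j v) +
          2 * δ * (∫ x, ∑ i, |⟪x i, b j⟫_ℝ| ∂μX) / (2 * a) := by
        rw [measureReal_def, measureReal_def, ← ENNReal.toReal_ofReal (by positivity :
          0 ≤ 2 * δ * (∫ x, ∑ i, |⟪x i, b j⟫_ℝ| ∂μX) / (2 * a)),
          ← ENNReal.toReal_add (measure_ne_top _ _) ENNReal.ofReal_ne_top]
        exact ENNReal.toReal_mono (by finiteness) hle
    _ = (dataLaw n p a μX (hypercubeVertex b δ v)).real (testError βhat b j v) +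
          δ * (∫ x, ∑ i, |⟪x i, b j⟫_ℝ| ∂μX) / a := by
        field_simp
    _ ≤ (dataLaw n p a μX (hypercubeVertex b δ v)).real (testError βhat b j v) + δ * c / a := by
        gcongr

theorem exists_sum_measureReal_testError_ge (ha : 0 < a) [IsProbabilityMeasure μX]
    (hβ : Measurable βhat) (hint : ∀ j, Integrable (fun x => ∑ i, |⟪x i, b j⟫_ℝ|) μX)
    (hδ : 0 ≤ δ) (hc : ∀ j, ∫ x, ∑ i, |⟪x i, b j⟫_ℝ| ∂μX ≤ c) :
    ∃ v, p * (1 - δ * c / a) / 2 ≤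
      ∑ j, (dataLaw n p a μX (hypercubeVertex b δ v)).real (testError βhat b j v) := by
  have := fun v => isProbabilityMeasure_dataLaw ha μX (hypercubeVertex b δ v)
  simpa using exists_sum_measureReal_ge (fun v => dataLaw n p a μX (hypercubeVertex b δ v))
    (measurableSet_testError hβ b) (testError_bitFlip b) fun j =>
      measureReal_testError_bitFlip_le μX b ha hβ hδ j (hint j) (hc j)

end LinearModel

section MinimaxBounds

open Filter Topology

variable {n p : ℕ} {a : ℝ} (μX : Measure (Fin n → EuclideanSpace ℝ (Fin p)))
  [IsProbabilityMeasure μX]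
  {βhat : (Fin n → EuclideanSpace ℝ (Fin p) × ℝ) → EuclideanSpace ℝ (Fin p)}

/-- The infimum defining the design constant need not be attained: each `c` above it yields the
risk bound `a² p / (16 c²)`, and we let `c` decrease to the design constant. -/
theorem ofReal_le_iSup_risk (ha : 0 < a) (hβ : Measurable βhat) (hI : 0 < designConstant μX) :
    ENNReal.ofReal (a ^ 2 * p / (16 * designConstant μX ^ 2)) ≤
      ⨆ βstar, ∫⁻ d, ENNReal.ofReal (‖βhat d - βstar‖ ^ 2) ∂(dataLaw n p a μX βstar) := by
  have hbound : ∀ c ∈ Set.Ioi (designConstant μX), ENNReal.ofReal (a ^ 2 * p / (16 * c ^ 2)) ≤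
      ⨆ βstar, ∫⁻ d, ENNReal.ofReal (‖βhat d - βstar‖ ^ 2) ∂(dataLaw n p a μX βstar) := by
    intro c (hc : designConstant μX < c)
    have hc0 : 0 < c := hI.trans hc
    obtain ⟨b, hb⟩ := exists_orthonormalBasis_integral_le hc
    obtain ⟨v, hv⟩ := exists_sum_measureReal_testError_ge μX b ha hβ
      (fun _ => integrable_of_designConstant_pos hI _) (δ := a / (2 * c)) (by positivity) hb
    have := isProbabilityMeasure_dataLaw ha μX (hypercubeVertex b (a / (2 * c)) v)
    have hδc : a / (2 * c) * c / a = 1 / 2 := by field_simp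
    rw [hδc] at hv
    calc ENNReal.ofReal (a ^ 2 * p / (16 * c ^ 2))
        ≤ ENNReal.ofReal ((a / (2 * c)) ^ 2 *
            ∑ j, (dataLaw n p a μX (hypercubeVertex b (a / (2 * c)) v)).real
              (testError βhat b j v)) := by
          refine ENNReal.ofReal_le_ofReal ?_
          calc a ^ 2 * p / (16 * c ^ 2) = (a / (2 * c)) ^ 2 * (p * (1 - 1 / 2) / 2) := by
                field_simp; ring
            _ ≤ _ := by gcongr
      _ ≤ _ := ofReal_sq_mul_sum_measureReal_testError_le _ hβ b (by positivity) v
      _ ≤ _ := le_iSup (fun βstar =>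
          ∫⁻ d, ENNReal.ofReal (‖βhat d - βstar‖ ^ 2) ∂(dataLaw n p a μX βstar)) _
  have hlim : Tendsto (fun c => ENNReal.ofReal (a ^ 2 * p / (16 * c ^ 2)))
      (𝓝[>] designConstant μX)
      (𝓝 (ENNReal.ofReal (a ^ 2 * p / (16 * designConstant μX ^ 2)))) :=
    ((ENNReal.continuous_ofReal.tendsto _).comp
      (ContinuousAt.tendsto (by fun_prop (disch := positivity)))).mono_left nhdsWithin_le_nhds
  exact le_of_tendsto hlim (eventually_nhdsWithin_of_forall hbound)

theorem inv_two_pow_le_iSup_prob (ha : 0 < a) (hβ : Measurable βhat) (hI : 0 < designConstant μX)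
    (hp : 0 < p) :
    ((2 : ℝ≥0∞) ^ 8)⁻¹ ≤ ⨆ βstar, dataLaw n p a μX βstar
      {d | √(a ^ 2 * p / (16 * designConstant μX ^ 2) / 2) ≤ ‖βhat d - βstar‖} := by
  set I := designConstant μX
  set δ := a / (2 * I)
  -- Any factor above `1` would do: `5 / 4` leaves the tests an error rate `3 / 16` above the
  -- Markov threshold `1 / 8`.
  obtain ⟨b, hb⟩ := exists_orthonormalBasis_integral_le (μX := μX) (c := 5 / 4 * I) (by linarith)
  obtain ⟨v, hv⟩ := exists_sum_measureReal_testError_ge μX b ha hβ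
    (fun _ => integrable_of_designConstant_pos hI _) (δ := δ) (by positivity) hb
  have := isProbabilityMeasure_dataLaw ha μX (hypercubeVertex b δ v)
  have hτ : √(a ^ 2 * p / (16 * I ^ 2) / 2) ^ 2 ≤ δ ^ 2 * (p / 8) := by
    rw [Real.sq_sqrt (by positivity)]
    refine le_of_eq ?_
    simp only [δ]
    field_simp
    ring
  have hmarkov := sum_measureReal_testError_le (dataLaw n p a μX (hypercubeVertex b δ v)) hβ b
    (by positivity) hτ v
  have hδI : δ * (5 / 4 * I) / a = 5 / 8 := by simp only [δ]; field_simp; ring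
  rw [hδI] at hv
  rw [Fintype.card_fin] at hmarkov
  have hprob : 1 / 16 ≤ (dataLaw n p a μX (hypercubeVertex b δ v)).real
      {d | √(a ^ 2 * p / (16 * I ^ 2) / 2) ≤ ‖βhat d - hypercubeVertex b δ v‖} := by
    have hp' : (0 : ℝ) < p := by exact_mod_cast hp
    nlinarith
  calc ((2 : ℝ≥0∞) ^ 8)⁻¹ ≤ ENNReal.ofReal (1 / 16) := by
        rw [one_div, ENNReal.ofReal_inv_of_pos (by norm_num)]
        exact ENNReal.inv_le_inv.2 (by norm_num)
    _ ≤ _ := ENNReal.ofReal_le_of_le_toReal hprob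
    _ ≤ _ := le_iSup (fun βstar => dataLaw n p a μX βstar
        {d | √(a ^ 2 * p / (16 * I ^ 2) / 2) ≤ ‖βhat d - βstar‖}) _

end MinimaxBounds

theorem minimax_lower_bound_uniform_noise_general
    {n p : ℕ} (a : ℝ) (ha : 0 < a)
    (μX : Measure (Fin n → EuclideanSpace ℝ (Fin p))) [IsProbabilityMeasure μX]
    (R : ℝ)
    (hRdef : R = a ^ 2 * p / (16 *
      (⨅ Rot : Matrix.orthogonalGroup (Fin p) ℝ, ⨆ j : Fin p,
        ∫ x, ∑ i, |∑ k, x i k * (Rot : Matrix (Fin p) (Fin p) ℝ) k j| ∂μX) ^ 2)) :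
    ∀ βhat : (Fin n → EuclideanSpace ℝ (Fin p) × ℝ) → EuclideanSpace ℝ (Fin p),
      Measurable βhat →
      (ENNReal.ofReal R ≤ ⨆ βstar : EuclideanSpace ℝ (Fin p),
        ∫⁻ d, ENNReal.ofReal (‖βhat d - βstar‖ ^ 2) ∂(dataLaw n p a μX βstar)) ∧
      ((2 : ℝ≥0∞) ^ 8)⁻¹ ≤ ⨆ βstar : EuclideanSpace ℝ (Fin p),
        dataLaw n p a μX βstar {d | Real.sqrt (R / 2) ≤ ‖βhat d - βstar‖} := by
  intro βhat hβ
  change R = a ^ 2 * p / (16 * designConstant μX ^ 2) at hRdef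
  rcases le_or_gt R 0 with hR | hR
  · have := isProbabilityMeasure_dataLaw ha μX 0
    refine ⟨by simp [ENNReal.ofReal_of_nonpos hR], le_iSup_of_le 0 ?_⟩
    simp only [Real.sqrt_eq_zero'.2 (by linarith : R / 2 ≤ 0), norm_nonneg, Set.ofPred_true,
      measure_univ]
    exact ENNReal.inv_le_one.2 (by norm_num)
  rw [hRdef] at hR
  have hI : 0 < designConstant μX :=
    (designConstant_nonneg μX).lt_of_ne fun h => by simp [← h] at hR
  have hp : 0 < p := Nat.pos_of_ne_zero fun h => by simp [h] at hR
  subst hRdef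
  exact ⟨ofReal_le_iSup_risk μX ha hβ hI, inv_two_pow_le_iSup_prob μX ha hβ hI hp⟩

theorem minimax_lower_bound_uniform_noise
    {n p : ℕ} (hn : 0 < n) (hp : 0 < p) (a : ℝ) (ha : 0 < a)
    (μX : Measure (Fin n → EuclideanSpace ℝ (Fin p))) [IsProbabilityMeasure μX]
    (R : ℝ)
    (hRdef : R = a ^ 2 * p / (16 *
      (⨅ Rot : Matrix.orthogonalGroup (Fin p) ℝ, ⨆ j : Fin p,
        ∫ x, ∑ i, |∑ k, x i k * (Rot : Matrix (Fin p) (Fin p) ℝ) k j| ∂μX) ^ 2)) :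
    ∀ βhat : (Fin n → EuclideanSpace ℝ (Fin p) × ℝ) → EuclideanSpace ℝ (Fin p),
      Measurable βhat →
      (ENNReal.ofReal R ≤ ⨆ βstar : EuclideanSpace ℝ (Fin p),
        ∫⁻ d, ENNReal.ofReal (‖βhat d - βstar‖ ^ 2) ∂(dataLaw n p a μX βstar)) ∧
      ((2 : ℝ≥0∞) ^ 8)⁻¹ ≤ ⨆ βstar : EuclideanSpace ℝ (Fin p),
        dataLaw n p a μX βstar {d | Real.sqrt (R / 2) ≤ ‖βhat d - βstar‖} :=
  minimax_lower_bound_uniform_noise_general a ha μX R hRdef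

end
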